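/- Let γ, D_qq, D_pq be real, D_pp > 0, and suppose the Lindblad quantity Δ := D_pp D_qq − D_pq² − γ²/4 satisfies Δ ≥ 0. Define on C_c^∞(ℝ,ℂ) the Lindblad operators L₁ = ((−2D_pq + iγ)/√(2D_pp)) p + √(2D_pp) q and L₂ = (2√Δ/√(2D_pp)) p. Then for every u ∈ C_c^∞(ℝ,ℂ): ‖L₁ u‖² + ‖L₂ u‖² = 2 D_qq ‖p u‖² − 2 D_pq ⟨u, (pq + qp) u⟩ + 2 D_pp ‖q u‖² − γ ‖u‖². Equivalently, −(1/2)(L₁*L₁ + L₂*L₂) agrees in the quadratic-form sense on C_c^∞(ℝ,ℂ) with G₀ = −D_qq p² + D_pq(pq + qp) − D_pp q² + γ/2. -/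

import Mathlib

open MeasureTheory Complex
open scoped ComplexOrder

noncomputable section

/-- Operators acting on complex-valued functions on `ℝ`. -/
abbrev Op : Type := (ℝ → ℂ) → (ℝ → ℂ)

/-- The momentum operator `(p u)(x) = -i u'(x)`. -/
def pOp : Op := fun u x => -Complex.I * deriv u x

/-- The position operator `(q u)(x) = x * u(x)`. -/
def qOp : Op := fun u x => (x : ℂ) * u x

/-- Multiplication operator by a real-valued function. -/
def mulOp (f : ℝ → ℝ) : Op := fun u x => (f x : ℂ) * u x

/-- Commutator of two operators. -/
def opComm (A B : Op) : Op := fun u => A (B u) - B (A u)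

/-- Anticommutator of two operators. -/
def opACom (A B : Op) : Op := fun u => A (B u) + B (A u)

/-- The `L²(ℝ,ℂ)` inner product, antilinear in the first argument. -/
def ip (u v : ℝ → ℂ) : ℂ := ∫ x : ℝ, (starRingEnd ℂ) (u x) * v x

/-- `u ∈ C_c^∞(ℝ,ℂ)`: smooth and compactly supported. -/
def IsTest (u : ℝ → ℂ) : Prop := ContDiff ℝ (⊤ : ℕ∞) u ∧ HasCompactSupport u

/-- The first Lindblad operator `L₁ = ((−2D_pq + iγ)/√(2D_pp)) p + √(2D_pp) q`. -/
def L1op (γ Dpp Dpq : ℝ) : Op :=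
  ((((-2*Dpq : ℝ) : ℂ) + Complex.I * (γ : ℂ)) / ((Real.sqrt (2*Dpp) : ℝ) : ℂ)) • pOp
  + ((Real.sqrt (2*Dpp) : ℝ) : ℂ) • qOp

/-- The second Lindblad operator `L₂ = (2√Δ/√(2D_pp)) p`, `Δ = D_pp D_qq − D_pq² − γ²/4`. -/
def L2op (γ Dpp Dqq Dpq : ℝ) : Op :=
  ((2 * Real.sqrt (Dpp*Dqq - Dpq^2 - γ^2/4) / Real.sqrt (2*Dpp) : ℝ) : ℂ) • pOp

/-- `G₀ = −D_qq p² + D_pq (pq+qp) − D_pp q² + γ/2`. -/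
def G0op (γ Dpp Dqq Dpq : ℝ) : Op := fun u =>
  (-(Dqq : ℂ)) • pOp (pOp u) + (Dpq : ℂ) • opACom pOp qOp u
  - (Dpp : ℂ) • qOp (qOp u) + ((γ/2 : ℝ) : ℂ) • u

/-!
Write `L₁ = a p + b q` and `L₂ = c p` with `b, c` real. Sesquilinearity gives
`‖L₁u‖² + ‖L₂u‖² = (|a|² + c²)‖pu‖² + b²‖qu‖² + ā b ⟨pu, qu⟩ + b a ⟨qu, pu⟩`.
Since `p` (integration by parts) and `q` are symmetric on `C_c^∞`, the cross terms split into
`Re(b a)⟨u, (pq+qp)u⟩` and `i Im(b a)⟨u, [q,p]u⟩ = -Im(b a)‖u‖²`. With the given coefficients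
`b a = -2 D_pq + iγ`, `b² = 2 D_pp` and `|a|² + c² = (4 D_pq² + γ² + 4Δ) / (2 D_pp) = 2 D_qq`.
The statement about `G₀` is the same identity read through the symmetry of `p` and `q`.
-/

open ComplexConjugate

variable {u v w : ℝ → ℂ}

lemma IsTest.continuous (hu : IsTest u) : Continuous u := hu.1.continuous

lemma IsTest.differentiable (hu : IsTest u) : Differentiable ℝ u :=
  hu.1.differentiable (by simp)

lemma IsTest.deriv (hu : IsTest u) : IsTest (deriv u) :=
  ⟨(contDiff_infty_iff_deriv.mp hu.1).2, hu.2.deriv⟩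

lemma IsTest.add (hu : IsTest u) (hv : IsTest v) : IsTest (u + v) :=
  ⟨hu.1.add hv.1, hu.2.add hv.2⟩

lemma IsTest.const_smul (c : ℂ) (hu : IsTest u) : IsTest (c • u) :=
  ⟨hu.1.const_smul c, hu.2.smul_left⟩

lemma IsTest.pOp (hu : IsTest u) : IsTest (pOp u) :=
  hu.deriv.const_smul (-I)

lemma IsTest.qOp (hu : IsTest u) : IsTest (qOp u) :=
  ⟨ofRealCLM.contDiff.mul hu.1, hu.2.mul_left⟩

lemma IsTest.integrable_conj_mul (hu : IsTest u) (hv : Continuous v) :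
    Integrable fun x => conj (u x) * v x :=
  ((continuous_conj.comp hu.continuous).mul hv).integrable_of_hasCompactSupport
    ((hu.2.comp_left (map_zero _)).mul_right)

lemma ip_add_left (hu : Integrable fun x => conj (u x) * w x)
    (hv : Integrable fun x => conj (v x) * w x) : ip (u + v) w = ip u w + ip v w := by
  simp only [ip, Pi.add_apply, map_add, add_mul]
  exact integral_add hu hv

lemma ip_add_right (hv : Integrable fun x => conj (u x) * v x)
    (hw : Integrable fun x => conj (u x) * w x) : ip u (v + w) = ip u v + ip u w := by
  simp only [ip, Pi.add_apply, mul_add]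
  exact integral_add hv hw

lemma ip_sub_right (hv : Integrable fun x => conj (u x) * v x)
    (hw : Integrable fun x => conj (u x) * w x) : ip u (v - w) = ip u v - ip u w := by
  simp only [ip, Pi.sub_apply, mul_sub]
  exact integral_sub hv hw

lemma ip_smul_left (c : ℂ) (u v : ℝ → ℂ) : ip (c • u) v = conj c * ip u v := by
  simp only [ip, Pi.smul_apply, smul_eq_mul, map_mul, mul_assoc, integral_const_mul]

lemma ip_smul_right (c : ℂ) (u v : ℝ → ℂ) : ip u (c • v) = c * ip u v := by
  simp only [ip, Pi.smul_apply, smul_eq_mul, mul_left_comm _ c, integral_const_mul]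

lemma ip_smul_add_smul_self (a b : ℂ) {f g : ℝ → ℂ} (hf : IsTest f) (hg : IsTest g) :
    ip (a • f + b • g) (a • f + b • g)
      = conj a * a * ip f f + conj a * b * ip f g + conj b * a * ip g f
        + conj b * b * ip g g := by
  have hF := hf.const_smul a
  have hG := hg.const_smul b
  rw [ip_add_left (hF.integrable_conj_mul (hF.add hG).continuous)
      (hG.integrable_conj_mul (hF.add hG).continuous),
    ip_add_right (hF.integrable_conj_mul hF.continuous) (hF.integrable_conj_mul hG.continuous),
    ip_add_right (hG.integrable_conj_mul hF.continuous) (hG.integrable_conj_mul hG.continuous)]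
  simp only [ip_smul_left, ip_smul_right]
  ring

lemma ip_qOp_left (u v : ℝ → ℂ) : ip (qOp u) v = ip u (qOp v) := by
  simp only [ip, qOp, map_mul, conj_ofReal]
  congr 1 with x
  ring

lemma ip_pOp_left (hu : IsTest u) (hv : IsTest v) : ip (pOp u) v = ip u (pOp v) := by
  have hparts : ∫ x, conj (u x) * deriv v x = -∫ x, conj (deriv u x) * v x :=
    integral_mul_deriv_eq_deriv_mul_of_integrable
      (fun x _ => (hu.differentiable x).hasDerivAt.star)
      (fun x _ => (hv.differentiable x).hasDerivAt)
      (hu.integrable_conj_mul hv.deriv.continuous) (hu.deriv.integrable_conj_mul hv.continuous)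
      (hu.integrable_conj_mul hv.continuous)
  calc ip (pOp u) v = I * ∫ x, conj (deriv u x) * v x := by
        simp only [ip, pOp, map_mul, map_neg, conj_I, neg_neg, mul_assoc, integral_const_mul]
    _ = -I * ∫ x, conj (u x) * deriv v x := by rw [hparts]; ring
    _ = ip u (pOp v) := by simp only [ip, pOp, mul_left_comm _ (-I), integral_const_mul]

lemma opComm_qOp_pOp (hu : Differentiable ℝ u) : opComm qOp pOp u = I • u := by
  funext x
  have hq : HasDerivAt (qOp u) (1 * u x + x * deriv u x) x :=
    (hasDerivAt_id x).ofReal_comp.mul (hu x).hasDerivAt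
  simp only [opComm, Pi.sub_apply, Pi.smul_apply, smul_eq_mul, pOp, hq.deriv, qOp]
  ring

lemma ip_qOp_pOp_sub_ip_pOp_qOp (hu : IsTest u) :
    ip (qOp u) (pOp u) - ip (pOp u) (qOp u) = I * ip u u := by
  rw [ip_qOp_left, ip_pOp_left hu hu.qOp,
    ← ip_sub_right (hu.integrable_conj_mul hu.pOp.qOp.continuous)
      (hu.integrable_conj_mul hu.qOp.pOp.continuous)]
  exact (congrArg (ip u) (opComm_qOp_pOp hu.differentiable)).trans (ip_smul_right I u u)

lemma ip_opACom_pOp_qOp (hu : IsTest u) :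
    ip u (opACom pOp qOp u) = ip (pOp u) (qOp u) + ip (qOp u) (pOp u) := by
  rw [ip_pOp_left hu hu.qOp, ip_qOp_left]
  exact ip_add_right (hu.integrable_conj_mul hu.qOp.pOp.continuous)
    (hu.integrable_conj_mul hu.pOp.qOp.continuous)

lemma normSq_L1op_coeff_add_sq_L2op_coeff {γ Dpp Dqq Dpq : ℝ} (hpp : 0 < Dpp)
    (hΔ : 0 ≤ Dpp*Dqq - Dpq^2 - γ^2/4) :
    normSq ((((-2*Dpq : ℝ) : ℂ) + I * γ) / (√(2*Dpp) : ℝ))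
      + (2 * √(Dpp*Dqq - Dpq^2 - γ^2/4) / √(2*Dpp)) ^ 2 = 2 * Dqq := by
  rw [map_div₀, normSq_ofReal, Real.mul_self_sqrt (by positivity), mul_comm I,
    normSq_add_mul_I, div_pow, mul_pow 2, Real.sq_sqrt hΔ, Real.sq_sqrt (by positivity)]
  field_simp
  ring

lemma ip_L1op_add_ip_L2op {γ Dpp Dqq Dpq : ℝ} (hpp : 0 < Dpp)
    (hΔ : 0 ≤ Dpp*Dqq - Dpq^2 - γ^2/4) (hu : IsTest u) :
    ip (L1op γ Dpp Dpq u) (L1op γ Dpp Dpq u) + ip (L2op γ Dpp Dqq Dpq u) (L2op γ Dpp Dqq Dpq u)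
      = ((2*Dqq : ℝ) : ℂ) * ip (pOp u) (pOp u) - ((2*Dpq : ℝ) : ℂ) * ip u (opACom pOp qOp u)
        + ((2*Dpp : ℝ) : ℂ) * ip (qOp u) (qOp u) - (γ : ℂ) * ip u u := by
  set s : ℝ := √(2*Dpp)
  set z : ℂ := ((-2*Dpq : ℝ) : ℂ) + I * γ
  set c : ℝ := 2 * √(Dpp*Dqq - Dpq^2 - γ^2/4) / s
  have hs : (s : ℂ) ≠ 0 := ofReal_ne_zero.2 (Real.sqrt_pos.2 (by linarith)).ne'
  have hss : conj (s : ℂ) * s = ((2*Dpp : ℝ) : ℂ) := by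
    rw [conj_ofReal, ← ofReal_mul, Real.mul_self_sqrt (by linarith)]
  have hzs : conj (z / s) * s = ((-2*Dpq : ℝ) : ℂ) - I * γ := by
    rw [map_div₀, conj_ofReal, div_mul_cancel₀ _ hs]
    simp only [z, map_add, map_mul, conj_ofReal, conj_I]
    ring
  have hsz : conj (s : ℂ) * (z / s) = ((-2*Dpq : ℝ) : ℂ) + I * γ := by
    rw [conj_ofReal, mul_div_cancel₀ _ hs]
  have hnorm : conj (z / s) * (z / s) + conj (c : ℂ) * c = ((2*Dqq : ℝ) : ℂ) := by
    rw [← normSq_eq_conj_mul_self, conj_ofReal, ← ofReal_mul, ← sq, ← ofReal_add,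
      normSq_L1op_coeff_add_sq_L2op_coeff hpp hΔ]
  rw [show L1op γ Dpp Dpq u = (z / s) • pOp u + (s : ℂ) • qOp u from rfl,
    show L2op γ Dpp Dqq Dpq u = (c : ℂ) • pOp u from rfl,
    ip_smul_add_smul_self _ _ hu.pOp hu.qOp, ip_smul_left, ip_smul_right,
    ip_opACom_pOp_qOp hu]
  linear_combination (norm := (push_cast; ring))
    ip (pOp u) (pOp u) * hnorm + ip (pOp u) (qOp u) * hzs
    + ip (qOp u) (pOp u) * hsz + ip (qOp u) (qOp u) * hss
    + I * γ * ip_qOp_pOp_sub_ip_pOp_qOp hu + γ * ip u u * I_mul_I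

lemma ip_G0op (γ Dpp Dqq Dpq : ℝ) (hu : IsTest u) :
    ip u (G0op γ Dpp Dqq Dpq u)
      = -(Dqq : ℂ) * ip (pOp u) (pOp u) + (Dpq : ℂ) * ip u (opACom pOp qOp u)
        - (Dpp : ℂ) * ip (qOp u) (qOp u) + ((γ/2 : ℝ) : ℂ) * ip u u := by
  have hp2 := hu.pOp.pOp.continuous
  have hq2 := hu.qOp.qOp.continuous
  have hA : Continuous (opACom pOp qOp u) := (hu.qOp.pOp.add hu.pOp.qOp).continuous
  have h := hu.continuous
  rw [G0op, ip_add_right, ip_sub_right, ip_add_right]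
  simp only [ip_smul_right, ← ip_pOp_left hu hu.pOp, ← ip_qOp_left]
  all_goals exact hu.integrable_conj_mul (by fun_prop)

/-- `‖L₁u‖² + ‖L₂u‖² = 2D_qq ‖pu‖² − 2D_pq ⟨u,(pq+qp)u⟩ + 2D_pp ‖qu‖² − γ ‖u‖²`;
equivalently `−(1/2)(L₁*L₁ + L₂*L₂)` agrees in the quadratic-form sense with `G₀`. -/
theorem lindblad_ops_quadratic_form (γ Dpp Dqq Dpq : ℝ) (hpp : 0 < Dpp)
    (hΔ : 0 ≤ Dpp*Dqq - Dpq^2 - γ^2/4) (u : ℝ → ℂ) (hu : IsTest u) :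
    ip (L1op γ Dpp Dpq u) (L1op γ Dpp Dpq u)
        + ip (L2op γ Dpp Dqq Dpq u) (L2op γ Dpp Dqq Dpq u)
      = ((2*Dqq : ℝ) : ℂ) * ip (pOp u) (pOp u)
        - ((2*Dpq : ℝ) : ℂ) * ip u (opACom pOp qOp u)
        + ((2*Dpp : ℝ) : ℂ) * ip (qOp u) (qOp u)
        - (γ : ℂ) * ip u u
    ∧ ip u (G0op γ Dpp Dqq Dpq u)
      = -(1/2) * (ip (L1op γ Dpp Dpq u) (L1op γ Dpp Dpq u)
          + ip (L2op γ Dpp Dqq Dpq u) (L2op γ Dpp Dqq Dpq u)) := by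
  have hL := ip_L1op_add_ip_L2op hpp hΔ hu
  refine ⟨hL, ?_⟩
  rw [ip_G0op γ Dpp Dqq Dpq hu, hL]
  push_cast
  ring
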